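/- Let f ∈ C([0,1],ℝ) and for n ∈ ℕ set ℰₙ(f) = 2ⁿ Σ_{i=0}^{2ⁿ−1} (f((i+1)2^{−n}) − f(i2^{−n}))²/2. Then supₙ ℰₙ(f) < ∞ if and only if f belongs to H¹((0,1)) (i.e., f has a weak derivative f′ ∈ L²((0,1))), and in that case supₙ ℰₙ(f) = limₙ ℰₙ(f) = (1/2)∫₀¹ f′(x)² dx. -/

import Mathlib

/-!
Let `hₙ` be the step function equal to `2ⁿ (f((i+1)2⁻ⁿ) - f(i2⁻ⁿ))` on the `i`-th dyadic cell of
level `n`, so that `‖hₙ‖² = 2ℰₙ(f)` in `L²(0,1)`. If the integrals of `v` over the intervals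
`[0, k2⁻ⁿ]` are the increments `f(k2⁻ⁿ) - f(0)`, then `⟪hₙ, v⟫ = 2ℰₙ(f)`. As `hₘ` has this property
at every level `n ≤ m`, `⟪hₙ, hₘ⟫ = ‖hₙ‖²`, i.e. `‖hₘ - hₙ‖² = 2ℰₘ(f) - 2ℰₙ(f)`: the energies
increase, and when they are bounded `hₙ` converges in `L²` to some `G` whose primitive agrees with
`f` at the dyadic points, hence on `[0,1]` by continuity. Conversely, if `f = f(0) + ∫ g`, then
`⟪hₙ, g⟫ = ‖hₙ‖²` gives `ℰₙ(f) ≤ ‖g‖²/2`, and the limit `G` has the same primitive as `g`, so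
`G = g` a.e. by Lebesgue's differentiation theorem and `ℰₙ(f) → ‖g‖²/2`.
-/

open MeasureTheory
open scoped ENNReal

noncomputable section

/-- Discrete Dirichlet energy of `f : [0,1] → ℝ` on the uniform grid of mesh
`2⁻ⁿ` (each edge counted once). -/
def gridEf (n : ℕ) (f : ℝ → ℝ) : ℝ :=
  2 ^ n * ∑ i ∈ Finset.range (2 ^ n),
    (f ((i + 1 : ℕ) / 2 ^ n) - f ((i : ℕ) / 2 ^ n)) ^ 2 / 2

/-- `f ∈ H¹((0,1))`: there is a weak derivative `g ∈ L²((0,1))`, i.e. `f` is the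
indefinite integral of some square-integrable `g`. -/
def MemH1 (f : ℝ → ℝ) : Prop :=
  ∃ g : ℝ → ℝ,
    MemLp g 2 (volume.restrict (Set.Ioo (0:ℝ) 1)) ∧
    ∀ x ∈ Set.Icc (0:ℝ) 1, f x = f 0 + ∫ t in (0:ℝ)..x, g t

open Set Filter Topology
open scoped RealInnerProductSpace

section OrthogonalIncrements

variable {E : Type*} [NormedAddCommGroup E] [InnerProductSpace ℝ E]

theorem norm_le_of_inner_eq_norm_sq {x y : E} (h : ⟪x, y⟫ = ‖x‖ ^ 2) : ‖x‖ ≤ ‖y‖ := by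
  have hcs := real_inner_le_norm x y
  rw [h, sq] at hcs
  rcases (norm_nonneg x).eq_or_lt with h0 | h0
  · exact h0 ▸ norm_nonneg y
  · exact le_of_mul_le_mul_left hcs h0

theorem norm_sub_sq_of_inner_eq_norm_sq {x y : E} (h : ⟪x, y⟫ = ‖x‖ ^ 2) :
    ‖y - x‖ ^ 2 = ‖y‖ ^ 2 - ‖x‖ ^ 2 := by
  rw [norm_sub_sq_real, real_inner_comm, h]
  ring

theorem cauchySeq_of_inner_eq_norm_sq {x : ℕ → E}
    (h : ∀ m n, m ≤ n → ⟪x m, x n⟫ = ‖x m‖ ^ 2) (hbdd : BddAbove (range fun n => ‖x n‖ ^ 2)) :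
    CauchySeq x := by
  have hmono : Monotone fun n => ‖x n‖ ^ 2 := fun m n hmn => by
    linarith [norm_sub_sq_of_inner_eq_norm_sq (h m n hmn), sq_nonneg ‖x n - x m‖]
  have hcauchy := Metric.cauchySeq_iff'.1 (tendsto_atTop_ciSup hmono hbdd).cauchySeq
  refine Metric.cauchySeq_iff'.2 fun ε hε => ?_
  obtain ⟨N, hN⟩ := hcauchy (ε ^ 2) (by positivity)
  refine ⟨N, fun n hn => lt_of_pow_lt_pow_left₀ 2 hε.le ?_⟩
  rw [dist_eq_norm, norm_sub_sq_of_inner_eq_norm_sq (h N n hn)]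
  exact (le_abs_self _).trans_lt (hN n hn)

end OrthogonalIncrements

theorem MeasureTheory.MemLp.inner_toLp_toLp {α : Type*} [MeasurableSpace α] {μ : Measure α}
    {u v : α → ℝ} (hu : MemLp u 2 μ) (hv : MemLp v 2 μ) :
    ⟪hu.toLp u, hv.toLp v⟫ = ∫ t, u t * v t ∂μ := by
  rw [L2.inner_def]
  refine integral_congr_ae ?_
  filter_upwards [hu.coeFn_toLp, hv.coeFn_toLp] with t hut hvt
  rw [hut, hvt, real_inner_eq_re_inner, RCLike.inner_apply, conj_trivial, mul_comm]
  rfl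

theorem ae_restrict_Ioo_eq_of_integral_eq {u v : ℝ → ℝ} {a b : ℝ}
    (hu : IntervalIntegrable u volume a b) (hv : IntervalIntegrable v volume a b)
    (h : ∀ x ∈ Icc a b, ∫ t in a..x, u t = ∫ t in a..x, v t) :
    u =ᵐ[volume.restrict (Ioo a b)] v := by
  filter_upwards [ae_restrict_mem measurableSet_Ioo, ae_restrict_of_ae hu.ae_hasDerivAt_integral,
    ae_restrict_of_ae hv.ae_hasDerivAt_integral] with x hx hux hvx
  have hab : uIcc a b = Icc a b := uIcc_of_le (hx.1.trans hx.2).le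
  have hxab : x ∈ uIcc a b := hab ▸ Ioo_subset_Icc_self hx
  refine (hux hxab a left_mem_uIcc).unique ((hvx hxab a left_mem_uIcc).congr_of_eventuallyEq ?_)
  filter_upwards [Ioo_mem_nhds hx.1 hx.2] with y hy using h y (Ioo_subset_Icc_self hy)

section Dyadic

local notation "μ₀₁" => volume.restrict (Ioo (0:ℝ) 1)

def dyadic (n k : ℕ) : ℝ := k / 2 ^ n

theorem dyadic_nonneg (n k : ℕ) : 0 ≤ dyadic n k := by unfold dyadic; positivity

theorem dyadic_le_one {n k : ℕ} (hk : k ≤ 2 ^ n) : dyadic n k ≤ 1 := by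
  rw [dyadic, div_le_one (by positivity)]
  exact_mod_cast hk

theorem dyadic_mem_Icc {n k : ℕ} (hk : k ≤ 2 ^ n) : dyadic n k ∈ Icc 0 1 :=
  ⟨dyadic_nonneg n k, dyadic_le_one hk⟩

theorem dyadic_add_one_sub (n k : ℕ) : dyadic n (k + 1) - dyadic n k = (2 ^ n)⁻¹ := by
  simp only [dyadic]; push_cast; ring

theorem dyadic_mul_pow (m d k : ℕ) : dyadic (m + d) (k * 2 ^ d) = dyadic m k := by
  simp only [dyadic]; push_cast; rw [pow_add]; field_simp

theorem eqOn_Icc_of_eq_dyadic {u w : ℝ → ℝ} (hu : ContinuousOn u (Icc 0 1))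
    (hw : ContinuousOn w (Icc 0 1)) (h : ∀ m k : ℕ, k ≤ 2 ^ m → u (dyadic m k) = w (dyadic m k)) :
    EqOn u w (Icc 0 1) := by
  intro x hx
  have hk m : ⌊x * 2 ^ m⌋₊ ≤ 2 ^ m := by
    exact_mod_cast Nat.floor_le_of_le <| by
      simpa using mul_le_of_le_one_left (pow_nonneg zero_le_two m) hx.2
  have hlim : Tendsto (fun m => dyadic m ⌊x * 2 ^ m⌋₊) atTop (𝓝[Icc 0 1] x) :=
    tendsto_nhdsWithin_iff.2
      ⟨(tendsto_nat_floor_mul_div_atTop hx.1).comp (tendsto_pow_atTop_atTop_of_one_lt one_lt_two),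
        Eventually.of_forall fun m => dyadic_mem_Icc (hk m)⟩
  refine tendsto_nhds_unique ((hu x hx).tendsto.comp hlim) ?_
  convert (hw x hx).tendsto.comp hlim using 1
  funext m
  exact h m _ (hk m)

-- The clamp to `2 ^ n - 1` only matters outside `[0, 1)`, where it keeps the function bounded.
def dyadicStep (n : ℕ) (c : ℕ → ℝ) (t : ℝ) : ℝ := c (min ⌊2 ^ n * t⌋₊ (2 ^ n - 1))

theorem dyadicStep_eq {n i : ℕ} (hi : i < 2 ^ n) (c : ℕ → ℝ) {t : ℝ}
    (ht : t ∈ Ico (dyadic n i) (dyadic n (i + 1))) : dyadicStep n c t = c i := by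
  have h2n : (0:ℝ) < 2 ^ n := by positivity
  have hfloor : ⌊2 ^ n * t⌋₊ = i := by
    rw [Nat.floor_eq_iff (mul_nonneg h2n.le ((dyadic_nonneg n i).trans ht.1))]
    obtain ⟨h1, h2⟩ := ht
    rw [dyadic, div_le_iff₀' h2n] at h1
    rw [dyadic, lt_div_iff₀' h2n] at h2
    push_cast at h2
    exact ⟨h1, h2⟩
  rw [dyadicStep, hfloor, min_eq_left (by omega)]

theorem measurable_dyadicStep (n : ℕ) (c : ℕ → ℝ) : Measurable (dyadicStep n c) :=
  (measurable_from_top (f := fun k : ℕ => c (min k (2 ^ n - 1)))).comp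
    (Nat.measurable_floor.comp (measurable_const_mul _))

theorem abs_dyadicStep_le (n : ℕ) (c : ℕ → ℝ) (t : ℝ) :
    |dyadicStep n c t| ≤ ∑ i ∈ Finset.range (2 ^ n), |c i| :=
  Finset.single_le_sum (f := fun i => |c i|) (fun i _ => abs_nonneg _)
    (Finset.mem_range.2 (by have := Nat.one_le_two_pow (n := n); omega))

theorem memLp_dyadicStep {μ : Measure ℝ} [IsFiniteMeasure μ] (n : ℕ) (c : ℕ → ℝ) :
    MemLp (dyadicStep n c) 2 μ :=
  MemLp.of_bound (measurable_dyadicStep n c).aestronglyMeasurable _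
    (Eventually.of_forall fun t => abs_dyadicStep_le n c t)

theorem intervalIntegrable_of_integrableOn_Ioo {v : ℝ → ℝ} {x y a b : ℝ}
    (hv : IntegrableOn v (Ioo x y)) (ha : a ∈ Icc x y) (hb : b ∈ Icc x y) :
    IntervalIntegrable v volume a b :=
  ((integrableOn_Icc_iff_integrableOn_Ioo (f := v) (μ := volume)).2 hv).mono_set
    (uIcc_subset_Icc ha hb) |>.intervalIntegrable

theorem intervalIntegral_dyadic_eq_sum {v : ℝ → ℝ} (hv : IntegrableOn v (Ioo 0 1)) {n k : ℕ}
    (hk : k ≤ 2 ^ n) :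
    ∫ t in (0:ℝ)..dyadic n k, v t
      = ∑ i ∈ Finset.range k, ∫ t in dyadic n i..dyadic n (i + 1), v t := by
  induction k with
  | zero => simp [dyadic]
  | succ k ih =>
    rw [Finset.sum_range_succ, ← ih (by omega), intervalIntegral.integral_add_adjacent_intervals]
    · exact intervalIntegrable_of_integrableOn_Ioo hv (by simp) (dyadic_mem_Icc (by omega))
    · exact intervalIntegrable_of_integrableOn_Ioo hv (dyadic_mem_Icc (by omega))
        (dyadic_mem_Icc hk)

theorem integral_dyadicStep_mul_cell {n i : ℕ} (hi : i < 2 ^ n) (c : ℕ → ℝ) (v : ℝ → ℝ) :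
    ∫ t in dyadic n i..dyadic n (i + 1), dyadicStep n c t * v t
      = c i * ∫ t in dyadic n i..dyadic n (i + 1), v t := by
  have hle : dyadic n i ≤ dyadic n (i + 1) :=
    sub_nonneg.1 <| (dyadic_add_one_sub n i).symm ▸ by positivity
  rw [intervalIntegral.integral_of_le hle, intervalIntegral.integral_of_le hle,
    integral_Ioc_eq_integral_Ioo, integral_Ioc_eq_integral_Ioo, ← integral_const_mul]
  exact setIntegral_congr_fun measurableSet_Ioo fun t ht => by
    rw [dyadicStep_eq hi c ⟨ht.1.le, ht.2⟩]

theorem integral_dyadicStep_mul {n : ℕ} (c : ℕ → ℝ) {v : ℝ → ℝ} (hv : IntegrableOn v (Ioo 0 1)) :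
    ∫ t in Ioo 0 1, dyadicStep n c t * v t
      = ∑ i ∈ Finset.range (2 ^ n), c i * ∫ t in dyadic n i..dyadic n (i + 1), v t := by
  have hcv : IntegrableOn (fun t => dyadicStep n c t * v t) (Ioo 0 1) :=
    hv.bdd_mul (measurable_dyadicStep n c).aestronglyMeasurable
      (Eventually.of_forall fun t => abs_dyadicStep_le n c t)
  have hone : dyadic n (2 ^ n) = 1 := by simp [dyadic]
  rw [← integral_Ioc_eq_integral_Ioo, ← intervalIntegral.integral_of_le zero_le_one, ← hone,
    intervalIntegral_dyadic_eq_sum hcv le_rfl]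
  exact Finset.sum_congr rfl fun i hi => integral_dyadicStep_mul_cell (Finset.mem_range.1 hi) c v

theorem intervalIntegrable_of_memLp {v : ℝ → ℝ} (hv : MemLp v 2 μ₀₁) :
    IntervalIntegrable v volume 0 1 :=
  intervalIntegrable_of_integrableOn_Ioo (hv.integrable one_le_two) (left_mem_Icc.2 zero_le_one)
    (right_mem_Icc.2 zero_le_one)

theorem setIntegral_Ioo_restrict_eq_intervalIntegral (v : ℝ → ℝ) {x : ℝ} (hx : x ∈ Icc 0 1) :
    ∫ t in Ioo 0 x, v t ∂μ₀₁ = ∫ t in (0:ℝ)..x, v t := by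
  rw [Measure.restrict_restrict measurableSet_Ioo, inter_eq_left.2 (Ioo_subset_Ioo_right hx.2),
    intervalIntegral.integral_of_le hx.1, integral_Ioc_eq_integral_Ioo]

def dyadicIncr (f : ℝ → ℝ) (n i : ℕ) : ℝ := f (dyadic n (i + 1)) - f (dyadic n i)

theorem gridEf_eq_sum_dyadicIncr (f : ℝ → ℝ) (n : ℕ) :
    2 * gridEf n f = ∑ i ∈ Finset.range (2 ^ n), 2 ^ n * dyadicIncr f n i * dyadicIncr f n i := by
  rw [gridEf, Finset.mul_sum, Finset.mul_sum]
  refine Finset.sum_congr rfl fun i _ => ?_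
  simp only [dyadicIncr, dyadic]
  ring

def IsDyadicPrimitive (f v : ℝ → ℝ) (n : ℕ) : Prop :=
  ∀ k ≤ 2 ^ n, ∫ t in (0:ℝ)..dyadic n k, v t = f (dyadic n k) - f 0

theorem IsDyadicPrimitive.mono {f v : ℝ → ℝ} {m n : ℕ} (h : IsDyadicPrimitive f v n)
    (hmn : m ≤ n) : IsDyadicPrimitive f v m := by
  obtain ⟨d, rfl⟩ := Nat.exists_eq_add_of_le hmn
  intro k hk
  rw [← dyadic_mul_pow m d k]
  exact h _ (by rw [pow_add]; exact Nat.mul_le_mul_right _ hk)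

theorem isDyadicPrimitive_of_eq_integral {f v : ℝ → ℝ}
    (hfv : ∀ x ∈ Icc (0:ℝ) 1, f x = f 0 + ∫ t in (0:ℝ)..x, v t) (n : ℕ) :
    IsDyadicPrimitive f v n := fun k hk => by
  rw [hfv _ (dyadic_mem_Icc hk)]
  ring

theorem IsDyadicPrimitive.integral_cell {f v : ℝ → ℝ} {n i : ℕ} (h : IsDyadicPrimitive f v n)
    (hv : IntegrableOn v (Ioo 0 1)) (hi : i < 2 ^ n) :
    ∫ t in dyadic n i..dyadic n (i + 1), v t = dyadicIncr f n i := by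
  rw [← intervalIntegral.integral_interval_sub_left
    (intervalIntegrable_of_integrableOn_Ioo hv (left_mem_Icc.2 zero_le_one) (dyadic_mem_Icc hi))
    (intervalIntegrable_of_integrableOn_Ioo hv (left_mem_Icc.2 zero_le_one) (dyadic_mem_Icc hi.le)),
    h _ hi, h _ hi.le, dyadicIncr]
  ring

def dyadicGrad (f : ℝ → ℝ) (n : ℕ) : ℝ → ℝ := dyadicStep n fun i => 2 ^ n * dyadicIncr f n i

theorem memLp_dyadicGrad {μ : Measure ℝ} [IsFiniteMeasure μ] (f : ℝ → ℝ) (n : ℕ) :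
    MemLp (dyadicGrad f n) 2 μ :=
  memLp_dyadicStep n _

def dyadicGradLp (f : ℝ → ℝ) (n : ℕ) : Lp ℝ 2 μ₀₁ := (memLp_dyadicGrad f n).toLp (dyadicGrad f n)

theorem isDyadicPrimitive_dyadicGrad (f : ℝ → ℝ) (n : ℕ) :
    IsDyadicPrimitive f (dyadicGrad f n) n := by
  intro k hk
  have hcell : ∀ i < 2 ^ n,
      ∫ t in dyadic n i..dyadic n (i + 1), dyadicGrad f n t = dyadicIncr f n i := by
    intro i hi
    have := integral_dyadicStep_mul_cell hi (fun i => 2 ^ n * dyadicIncr f n i) fun _ => 1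
    simp only [mul_one, intervalIntegral.integral_const, smul_eq_mul, dyadic_add_one_sub] at this
    rw [dyadicGrad, this]
    field_simp
  rw [intervalIntegral_dyadic_eq_sum ((memLp_dyadicGrad f n).integrable one_le_two) hk,
    Finset.sum_congr rfl fun i hi => hcell i (by have := Finset.mem_range.1 hi; omega)]
  exact (Finset.sum_range_sub (fun i => f (dyadic n i)) k).trans (by simp [dyadic])

theorem inner_dyadicGradLp_toLp {f v : ℝ → ℝ} {n : ℕ} (hv : MemLp v 2 μ₀₁)
    (h : IsDyadicPrimitive f v n) : ⟪dyadicGradLp f n, hv.toLp v⟫ = 2 * gridEf n f := by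
  have hv1 : IntegrableOn v (Ioo 0 1) := hv.integrable one_le_two
  rw [dyadicGradLp, MemLp.inner_toLp_toLp, dyadicGrad, integral_dyadicStep_mul _ hv1,
    gridEf_eq_sum_dyadicIncr]
  exact Finset.sum_congr rfl fun i hi => by rw [h.integral_cell hv1 (Finset.mem_range.1 hi)]

theorem norm_dyadicGradLp_sq (f : ℝ → ℝ) (n : ℕ) : ‖dyadicGradLp f n‖ ^ 2 = 2 * gridEf n f := by
  rw [← real_inner_self_eq_norm_sq]
  exact inner_dyadicGradLp_toLp _ (isDyadicPrimitive_dyadicGrad f n)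

theorem inner_dyadicGradLp_of_le (f : ℝ → ℝ) {m n : ℕ} (hmn : m ≤ n) :
    ⟪dyadicGradLp f m, dyadicGradLp f n⟫ = ‖dyadicGradLp f m‖ ^ 2 := by
  rw [norm_dyadicGradLp_sq]
  exact inner_dyadicGradLp_toLp _ ((isDyadicPrimitive_dyadicGrad f n).mono hmn)

theorem monotone_gridEf (f : ℝ → ℝ) : Monotone fun n => gridEf n f := fun m n hmn => by
  have := norm_sub_sq_of_inner_eq_norm_sq (inner_dyadicGradLp_of_le f hmn)
  rw [norm_dyadicGradLp_sq, norm_dyadicGradLp_sq] at this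
  linarith [sq_nonneg ‖dyadicGradLp f n - dyadicGradLp f m‖]

theorem cauchySeq_dyadicGradLp {f : ℝ → ℝ} (hbdd : BddAbove (range fun n => gridEf n f)) :
    CauchySeq (dyadicGradLp f) := by
  refine cauchySeq_of_inner_eq_norm_sq (fun m n => inner_dyadicGradLp_of_le f) ?_
  obtain ⟨C, hC⟩ := hbdd
  refine ⟨2 * C, ?_⟩
  rintro _ ⟨n, rfl⟩
  show ‖dyadicGradLp f n‖ ^ 2 ≤ 2 * C
  rw [norm_dyadicGradLp_sq]
  linarith [hC ⟨n, rfl⟩]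

theorem isDyadicPrimitive_of_tendsto {f : ℝ → ℝ} {G : Lp ℝ 2 μ₀₁}
    (hG : Tendsto (dyadicGradLp f) atTop (𝓝 G)) (m : ℕ) : IsDyadicPrimitive f G m := by
  intro k hk
  have hx := dyadic_mem_Icc hk
  set T := indicatorConstLp 2 (measurableSet_Ioo (a := 0) (b := dyadic m k))
    (measure_ne_top μ₀₁ _) (1:ℝ)
  have hT : ∀ F : Lp ℝ 2 μ₀₁, ⟪T, F⟫ = ∫ t in Ioo 0 (dyadic m k), F t ∂μ₀₁ :=
    fun F => L2.inner_indicatorConstLp_one _ _ F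
  have hHn : ∀ n ≥ m, ⟪T, dyadicGradLp f n⟫ = f (dyadic m k) - f 0 := fun n hn => by
    rw [hT, dyadicGradLp, integral_congr_ae (ae_restrict_of_ae (memLp_dyadicGrad f n).coeFn_toLp),
      setIntegral_Ioo_restrict_eq_intervalIntegral _ hx]
    exact (isDyadicPrimitive_dyadicGrad f n).mono hn k hk
  rw [← setIntegral_Ioo_restrict_eq_intervalIntegral _ hx, ← hT]
  refine tendsto_nhds_unique (tendsto_const_nhds.inner hG) (tendsto_const_nhds.congr' ?_)
  filter_upwards [eventually_ge_atTop m] with n hn using (hHn n hn).symm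

theorem exists_tendsto_dyadicGradLp {f : ℝ → ℝ} (hf : ContinuousOn f (Icc 0 1))
    (hbdd : BddAbove (range fun n => gridEf n f)) :
    ∃ G : Lp ℝ 2 μ₀₁, Tendsto (dyadicGradLp f) atTop (𝓝 G) ∧
      ∀ x ∈ Icc (0:ℝ) 1, f x = f 0 + ∫ t in (0:ℝ)..x, G t := by
  obtain ⟨G, hG⟩ := cauchySeq_tendsto_of_complete (cauchySeq_dyadicGradLp hbdd)
  refine ⟨G, hG, eqOn_Icc_of_eq_dyadic hf ?_ fun m k hk => ?_⟩
  · exact continuousOn_const.add <| (intervalIntegral.continuousOn_primitive_interval'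
      (intervalIntegrable_of_memLp (Lp.memLp G)) left_mem_uIcc).mono Icc_subset_uIcc
  · linarith [isDyadicPrimitive_of_tendsto hG m k hk]

theorem tendsto_gridEf_of_eq_integral {f g : ℝ → ℝ} (hf : ContinuousOn f (Icc 0 1))
    (hg : MemLp g 2 μ₀₁) (hfg : ∀ x ∈ Icc (0:ℝ) 1, f x = f 0 + ∫ t in (0:ℝ)..x, g t) :
    Tendsto (fun n => gridEf n f) atTop (𝓝 ((1 / 2) * ∫ t in Ioo 0 1, g t ^ 2)) := by
  have hinner n : ⟪dyadicGradLp f n, hg.toLp g⟫ = ‖dyadicGradLp f n‖ ^ 2 := by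
    rw [norm_dyadicGradLp_sq, inner_dyadicGradLp_toLp hg (isDyadicPrimitive_of_eq_integral hfg n)]
  have hbdd : BddAbove (range fun n => gridEf n f) := by
    refine ⟨‖hg.toLp g‖ ^ 2 / 2, ?_⟩
    rintro _ ⟨n, rfl⟩
    have := pow_le_pow_left₀ (norm_nonneg _) (norm_le_of_inner_eq_norm_sq (hinner n)) 2
    rw [norm_dyadicGradLp_sq] at this
    show gridEf n f ≤ _
    linarith
  obtain ⟨G, hG, hfG⟩ := exists_tendsto_dyadicGradLp hf hbdd
  have hGg : G =ᵐ[μ₀₁] g := ae_restrict_Ioo_eq_of_integral_eq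
    (intervalIntegrable_of_memLp (Lp.memLp G)) (intervalIntegrable_of_memLp hg)
    fun x hx => by linarith [hfG x hx, hfg x hx]
  have hnorm : ‖G‖ ^ 2 = ∫ t in Ioo 0 1, g t ^ 2 := by
    rw [← real_inner_self_eq_norm_sq, Lp.ext (hGg.trans hg.coeFn_toLp.symm),
      MemLp.inner_toLp_toLp]
    simp_rw [sq]
  have hlim := (hG.norm.pow 2).div_const 2
  simp only [norm_dyadicGradLp_sq, hnorm] at hlim
  convert hlim using 2 <;> ring

theorem iSup_ofReal_gridEf_eq {f : ℝ → ℝ} {L : ℝ} (h : Tendsto (fun n => gridEf n f) atTop (𝓝 L)) :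
    ⨆ n, ENNReal.ofReal (gridEf n f) = ENNReal.ofReal L :=
  iSup_eq_of_tendsto (ENNReal.ofReal_mono.comp (monotone_gridEf f))
    ((ENNReal.continuous_ofReal.tendsto L).comp h)

theorem bddAbove_gridEf_of_iSup_lt_top {f : ℝ → ℝ} (h : ⨆ n, ENNReal.ofReal (gridEf n f) < ⊤) :
    BddAbove (range fun n => gridEf n f) := by
  refine ⟨(⨆ n, ENNReal.ofReal (gridEf n f)).toReal, ?_⟩
  rintro _ ⟨n, rfl⟩
  exact (ENNReal.ofReal_le_iff_le_toReal h.ne).1 (le_iSup (fun n => ENNReal.ofReal (gridEf n f)) n)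

end Dyadic

/-- For continuous `f : [0,1] → ℝ`, `supₙ ℰₙ(f) < ∞` iff
`f ∈ H¹((0,1))`, and in that case
`supₙ ℰₙ(f) = limₙ ℰₙ(f) = (1/2)∫₀¹ f′(x)² dx`. -/
theorem statement15 (f : ℝ → ℝ) (hf : ContinuousOn f (Set.Icc 0 1)) :
    ((⨆ n : ℕ, ENNReal.ofReal (gridEf n f)) < ⊤ ↔ MemH1 f) ∧
    ∀ g : ℝ → ℝ,
      MemLp g 2 (volume.restrict (Set.Ioo (0:ℝ) 1)) →
      (∀ x ∈ Set.Icc (0:ℝ) 1, f x = f 0 + ∫ t in (0:ℝ)..x, g t) →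
      Filter.Tendsto (fun n => gridEf n f) Filter.atTop
        (nhds ((1/2) * ∫ t in Set.Ioo (0:ℝ) 1, (g t) ^ 2)) ∧
      (⨆ n : ℕ, ENNReal.ofReal (gridEf n f))
        = ENNReal.ofReal ((1/2) * ∫ t in Set.Ioo (0:ℝ) 1, (g t) ^ 2) := by
  refine ⟨⟨fun hsup => ?_, ?_⟩, fun g hg hfg => ?_⟩
  · obtain ⟨G, -, hfG⟩ := exists_tendsto_dyadicGradLp hf (bddAbove_gridEf_of_iSup_lt_top hsup)
    exact ⟨G, Lp.memLp G, hfG⟩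
  · rintro ⟨g, hg, hfg⟩
    rw [iSup_ofReal_gridEf_eq (tendsto_gridEf_of_eq_integral hf hg hfg)]
    exact ENNReal.ofReal_lt_top
  · have h := tendsto_gridEf_of_eq_integral hf hg hfg
    exact ⟨h, iSup_ofReal_gridEf_eq h⟩

end
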